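/- arXiv:2306.14207 — 5 statements merged into one kernel-verified Lean document; each statement's English description precedes it below -/
import Mathlib

section
/- Let X_N ⊂ C(Ω) be an N-dimensional subspace, u₁, …, u_N an orthonormal basis of X_N with respect to a probability measure μ, and set U(x) = (1/N)Σ_{k=1}^N |u_k(x)|². Suppose points ξ¹, …, ξ^m ∈ Ω and nonnegative weights λ₁, …, λ_m satisfy C₂‖g‖²_{L₂(μ̃)} ≤ Σ_j λ_j |g(ξ^j)|² ≤ C₃‖g‖²_{L₂(μ̃)} for all g in the space spanned by the functions U^{−1/2}u_k, where μ̃ = U·μ, and suppose the constant function 1 belongs to X_N. Then for every f ∈ X_N and every x with U(x) > 0, |f(x)|/(Σ_k |u_k(x)|²)^{1/2} ≤ (C₃/C₂)^{1/2} max_j |f(ξ^j)|. -/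
open MeasureTheory

set_option maxHeartbeats 1000000 in
theorem weighted_uniform_discretization
    {Ω : Type*} [TopologicalSpace Ω] [CompactSpace Ω] [MeasurableSpace Ω]
    (μ : Measure Ω) [IsProbabilityMeasure μ]
    (N : ℕ) (hN : 0 < N) (u : Fin N → Ω → ℝ) (hcont : ∀ k, Continuous (u k))
    (horth : ∀ i j, ∫ x, u i x * u j x ∂μ = if i = j then 1 else 0)
    (U : Ω → ℝ) (hU : U = fun x => (1 / N) * ∑ k, (u k x) ^ 2)
    (hone : (fun _ => (1 : ℝ)) ∈ Submodule.span ℝ (Set.range u))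
    (m : ℕ) (hm : 0 < m) (ξ : Fin m → Ω) (lam : Fin m → ℝ) (hlam : ∀ j, 0 ≤ lam j)
    (C₂ C₃ : ℝ) (hC₂ : 0 < C₂) (hC₃ : 0 < C₃)
    (hdisc : ∀ g ∈ Submodule.span ℝ
        (Set.range fun k => fun x => (U x) ^ (-(1/2) : ℝ) * u k x),
      C₂ * ∫ x, U x * (g x) ^ 2 ∂μ ≤ ∑ j, lam j * (g (ξ j)) ^ 2 ∧
      ∑ j, lam j * (g (ξ j)) ^ 2 ≤ C₃ * ∫ x, U x * (g x) ^ 2 ∂μ) :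
    ∀ f ∈ Submodule.span ℝ (Set.range u), ∀ x : Ω, 0 < U x →
      |f x| / Real.sqrt (∑ k, (u k x) ^ 2) ≤
        Real.sqrt (C₃ / C₂) *
          Finset.univ.sup' (Finset.univ_nonempty_iff.mpr ⟨⟨0, hm⟩⟩)
            (fun j => |f (ξ j)|) := by
  -- basic facts about U
  have hUnn : ∀ y, 0 ≤ U y := by
    intro y; rw [hU]; positivity
  have hUz : ∀ y, U y = 0 → ∀ k, u k y = 0 := by
    intro y hy k
    rw [hU] at hy
    have hNpos : (0:ℝ) < (1/N : ℝ) := by positivity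
    have hsum : ∑ k, (u k y) ^ 2 = 0 := by
      rcases mul_eq_zero.mp hy with h | h
      · exact absurd h (ne_of_gt hNpos)
      · exact h
    have h0 : (u k y) ^ 2 = 0 :=
      (Finset.sum_eq_zero_iff_of_nonneg (fun k _ => sq_nonneg (u k y))).mp hsum k
        (Finset.mem_univ k)
    exact sq_eq_zero_iff.mp h0
  have hpowsq : ∀ y, 0 < U y → ((U y) ^ (-(1/2) : ℝ)) ^ 2 = (U y)⁻¹ := by
    intro y h
    rw [← Real.rpow_natCast ((U y) ^ (-(1/2) : ℝ)) 2, ← Real.rpow_mul h.le]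
    norm_num [Real.rpow_neg_one]
  -- key pointwise identity
  have hkey : ∀ (v : Ω → ℝ), (∀ y, U y = 0 → v y = 0) →
      ∀ y, U y * ((U y) ^ (-(1/2) : ℝ) * v y) ^ 2 = (v y) ^ 2 := by
    intro v hv y
    rcases eq_or_lt_of_le (hUnn y) with h | h
    · rw [← h, hv y h.symm]
      simp
    · rw [mul_pow, hpowsq y h]
      field_simp
  -- membership of renormalized combinations in the renormalized span
  have hmem : ∀ c : Fin N → ℝ,
      (fun y => (U y) ^ (-(1/2) : ℝ) * ∑ k, c k * u k y) ∈ Submodule.span ℝ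
        (Set.range fun k => fun x => (U x) ^ (-(1/2) : ℝ) * u k x) := by
    intro c
    have : (fun y => (U y) ^ (-(1/2) : ℝ) * ∑ k, c k * u k y)
        = ∑ k, c k • (fun x => (U x) ^ (-(1/2) : ℝ) * u k x) := by
      funext y
      simp only [Finset.sum_apply, Pi.smul_apply, smul_eq_mul, Finset.mul_sum]
      exact Finset.sum_congr rfl fun k _ => by ring
    rw [this]
    exact Submodule.sum_mem _ fun k _ =>
      Submodule.smul_mem _ _ (Submodule.subset_span ⟨k, rfl⟩)
  -- squares of basis functions are integrable
  have hIsq : ∀ i, Integrable (fun y => u i y * u i y) μ := by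
    intro i
    by_contra h
    have h0 := integral_undef h
    have h1 := horth i i
    rw [if_pos rfl] at h1
    rw [h0] at h1
    norm_num at h1
  -- integral identity for renormalized combinations
  have hIntEq : ∀ c : Fin N → ℝ,
      ∫ x, U x * ((U x) ^ (-(1/2) : ℝ) * ((fun y => ∑ k, c k * u k y) x)) ^ 2 ∂μ
        = ∫ x, (∑ k, c k * u k x) ^ 2 ∂μ := by
    intro c
    apply integral_congr_ae
    apply ae_of_all
    intro y
    exact hkey (fun y => ∑ k, c k * u k y)
      (fun y hy => Finset.sum_eq_zero fun k _ => by rw [hUz y hy k, mul_zero]) y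
  -- lower bound for the single-function discretization sums
  have hQlow : ∀ i, C₂ ≤ ∑ j, lam j * ((U (ξ j)) ^ (-(1/2) : ℝ) * u i (ξ j)) ^ 2 := by
    intro i
    have hmemi : (fun y => (U y) ^ (-(1/2) : ℝ) * u i y) ∈ Submodule.span ℝ
        (Set.range fun k => fun x => (U x) ^ (-(1/2) : ℝ) * u k x) :=
      Submodule.subset_span ⟨i, rfl⟩
    have h := (hdisc _ hmemi).1
    have hint : ∫ x, U x * ((U x) ^ (-(1/2) : ℝ) * u i x) ^ 2 ∂μ = 1 := by
      have heq : ∀ y, U y * ((U y) ^ (-(1/2) : ℝ) * u i y) ^ 2 = u i y * u i y := by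
        intro y
        rw [hkey (u i) (fun y hy => hUz y hy i) y, sq]
      rw [integral_congr_ae (ae_of_all _ heq), horth i i, if_pos rfl]
    rw [hint, mul_one] at h
    exact h
  -- all products are integrable
  have hIprod : ∀ i j, Integrable (fun y => u i y * u j y) μ := by
    intro i j
    have hdom : ∀ (F : Ω → ℝ), AEStronglyMeasurable F μ →
        (∀ y, |F y| ≤ u i y * u i y + u j y * u j y) → Integrable F μ := by
      intro F hF hb
      refine ((hIsq i).add (hIsq j)).mono hF (ae_of_all _ fun y => ?_)
      have h1 : (0:ℝ) ≤ u i y * u i y + u j y * u j y := by nlinarith [mul_self_nonneg (u i y), mul_self_nonneg (u j y)]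
      simp only [Real.norm_eq_abs, Pi.add_apply]
      rw [abs_of_nonneg h1]
      exact hb y
    by_contra h
    have hF : ¬ AEStronglyMeasurable (fun y => u i y * u j y) μ := by
      intro hA
      refine h (hdom _ hA fun y => ?_)
      rw [abs_le]
      constructor <;> nlinarith [sq_nonneg (u i y - u j y), sq_nonneg (u i y + u j y)]
    have hAii : AEStronglyMeasurable (fun y => u i y * u i y) μ := (hIsq i).1
    have hAjj : AEStronglyMeasurable (fun y => u j y * u j y) μ := (hIsq j).1
    -- both (u i + u j)^2 and (u i - u j)^2 fail to be a.e. strongly measurable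
    have hp : ¬ AEStronglyMeasurable (fun y => (u i y + u j y) * (u i y + u j y)) μ := by
      intro hA
      apply hF
      have heq : (fun y => u i y * u j y) = fun y =>
          (1/2 : ℝ) * ((u i y + u j y) * (u i y + u j y) - u i y * u i y - u j y * u j y) := by
        funext y; ring
      rw [heq]
      exact ((hA.sub hAii).sub hAjj).const_mul (1/2 : ℝ)
    have hq : ¬ AEStronglyMeasurable (fun y => (u i y - u j y) * (u i y - u j y)) μ := by
      intro hA
      apply hF
      have heq : (fun y => u i y * u j y) = fun y =>
          (1/2 : ℝ) * (u i y * u i y + u j y * u j y - (u i y - u j y) * (u i y - u j y)) := by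
        funext y; ring
      rw [heq]
      exact ((hAii.add hAjj).sub hA).const_mul (1/2 : ℝ)
    -- hence their integrals (of U * g^2) vanish, and the discretization sums vanish
    have hzero : ∀ (s : ℝ), s = 1 ∨ s = -1 →
        ∑ j', lam j' * ((U (ξ j')) ^ (-(1/2) : ℝ) * (u i (ξ j') + s * u j (ξ j'))) ^ 2 ≤ 0 := by
      intro s hs
      have hni : ¬ Integrable (fun y => (u i y + s * u j y) ^ 2) μ := by
        intro hInt
        rcases hs with rfl | rfl
        · apply hp
          have : (fun y => (u i y + u j y) * (u i y + u j y))
              = fun y => (u i y + 1 * u j y) ^ 2 := by funext y; ring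
          rw [this]; exact hInt.1
        · apply hq
          have : (fun y => (u i y - u j y) * (u i y - u j y))
              = fun y => (u i y + (-1) * u j y) ^ 2 := by funext y; ring
          rw [this]; exact hInt.1
      set c : Fin N → ℝ := fun k => (if k = i then 1 else 0) + s * (if k = j then 1 else 0) with hc
      have hcsum : ∀ y, ∑ k, c k * u k y = u i y + s * u j y := by
        intro y
        simp only [hc, add_mul, Finset.sum_add_distrib, ite_mul, one_mul, zero_mul, mul_assoc]
        rw [Finset.sum_ite_eq' Finset.univ i (fun k => u k y),
          ← Finset.mul_sum, Finset.sum_ite_eq' Finset.univ j (fun k => u k y)]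
        simp
      have hmemc := hmem c
      have hg : (fun y => (U y) ^ (-(1/2) : ℝ) * ∑ k, c k * u k y)
          = fun y => (U y) ^ (-(1/2) : ℝ) * (u i y + s * u j y) := by
        funext y; rw [hcsum y]
      rw [hg] at hmemc
      have h2 := (hdisc _ hmemc).2
      have hint0 : ∫ x, U x * ((U x) ^ (-(1/2) : ℝ) * (u i x + s * u j x)) ^ 2 ∂μ = 0 := by
        have heq : ∀ y, U y * ((U y) ^ (-(1/2) : ℝ) * (u i y + s * u j y)) ^ 2
            = (u i y + s * u j y) ^ 2 := by
          intro y
          exact hkey (fun y => u i y + s * u j y)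
            (fun y hy => by show u i y + s * u j y = 0
                            rw [hUz y hy i, hUz y hy j, mul_zero, add_zero]) y
        rw [integral_congr_ae (ae_of_all _ heq)]
        exact integral_undef hni
      rw [hint0, mul_zero] at h2
      exact h2
    have hsum1 := hzero 1 (Or.inl rfl)
    have hsum2 := hzero (-1) (Or.inr rfl)
    have hcomb : ∑ j', lam j' * ((U (ξ j')) ^ (-(1/2) : ℝ) * u i (ξ j')) ^ 2 ≤ 0 := by
      have hterm : ∀ j' : Fin m, lam j' * ((U (ξ j')) ^ (-(1/2) : ℝ) * u i (ξ j')) ^ 2 ≤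
          (lam j' * ((U (ξ j')) ^ (-(1/2) : ℝ) * (u i (ξ j') + 1 * u j (ξ j'))) ^ 2
          + lam j' * ((U (ξ j')) ^ (-(1/2) : ℝ) * (u i (ξ j') + (-1) * u j (ξ j'))) ^ 2) / 2 := by
        intro j'
        have hl := hlam j'
        nlinarith [sq_nonneg ((U (ξ j')) ^ (-(1/2) : ℝ) * u j (ξ j')),
          mul_nonneg hl (sq_nonneg ((U (ξ j')) ^ (-(1/2) : ℝ) * u j (ξ j')))]
      calc ∑ j', lam j' * ((U (ξ j')) ^ (-(1/2) : ℝ) * u i (ξ j')) ^ 2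
          ≤ ∑ j', (lam j' * ((U (ξ j')) ^ (-(1/2) : ℝ) * (u i (ξ j') + 1 * u j (ξ j'))) ^ 2
          + lam j' * ((U (ξ j')) ^ (-(1/2) : ℝ) * (u i (ξ j') + (-1) * u j (ξ j'))) ^ 2) / 2 :=
            Finset.sum_le_sum fun j' _ => hterm j'
        _ ≤ 0 := by
            rw [← Finset.sum_div, Finset.sum_add_distrib]
            linarith
    linarith [hQlow i]
  -- now the main argument
  intro f hf x hx
  obtain ⟨c, hc⟩ := (Submodule.mem_span_range_iff_exists_fun ℝ).mp hf
  obtain ⟨a, ha⟩ := (Submodule.mem_span_range_iff_exists_fun ℝ).mp hone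
  have hfx : ∀ y, f y = ∑ k, c k * u k y := by
    intro y
    rw [← hc]
    simp [Finset.sum_apply]
  have h1x : ∀ y, ∑ k, a k * u k y = 1 := by
    intro y
    have := congrFun ha y
    simpa [Finset.sum_apply] using this
  -- ∫ f^2 = ∑ c^2
  have hfsq : ∫ x, (f x) ^ 2 ∂μ = ∑ k, (c k) ^ 2 := by
    have expand : ∀ y, (f y) ^ 2 = ∑ k, ∑ l, (c k * c l) * (u k y * u l y) := by
      intro y
      rw [hfx y, sq, Finset.sum_mul_sum]
      exact Finset.sum_congr rfl fun k _ => Finset.sum_congr rfl fun l _ => by ring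
    rw [integral_congr_ae (ae_of_all _ expand)]
    rw [integral_finset_sum _ fun k _ => integrable_finset_sum _ fun l _ =>
      ((hIprod k l).const_mul (c k * c l))]
    have : ∀ k : Fin N, (k ∈ Finset.univ) → (∫ x, ∑ l, (c k * c l) * (u k x * u l x) ∂μ) = (c k) ^ 2 := by
      intro k _
      rw [integral_finset_sum _ fun l _ => ((hIprod k l).const_mul (c k * c l))]
      have : ∀ l : Fin N, (l ∈ Finset.univ) → (∫ x, (c k * c l) * (u k x * u l x) ∂μ)
          = (c k * c l) * (if k = l then 1 else 0) := by
        intro l _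
        rw [integral_const_mul, horth k l]
      rw [Finset.sum_congr rfl this]
      simp [sq]
    exact Finset.sum_congr rfl this
  -- the renormalized f
  have hmemf := hmem c
  have hgf : (fun y => (U y) ^ (-(1/2) : ℝ) * ∑ k, c k * u k y)
      = fun y => (U y) ^ (-(1/2) : ℝ) * f y := by
    funext y; rw [hfx y]
  rw [hgf] at hmemf
  have hdf := hdisc _ hmemf
  have hintf : ∫ x, U x * ((U x) ^ (-(1/2) : ℝ) * f x) ^ 2 ∂μ = ∑ k, (c k) ^ 2 := by
    have hvan : ∀ y, U y = 0 → f y = 0 := by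
      intro y hy
      rw [hfx y]
      exact Finset.sum_eq_zero fun k _ => by rw [hUz y hy k, mul_zero]
    have heq : ∀ y, U y * ((U y) ^ (-(1/2) : ℝ) * f y) ^ 2 = (f y) ^ 2 := fun y =>
      hkey f hvan y
    rw [integral_congr_ae (ae_of_all _ heq), hfsq]
  -- the renormalized constant one
  have hmem1 := hmem a
  have hg1 : (fun y => (U y) ^ (-(1/2) : ℝ) * ∑ k, a k * u k y)
      = fun y => (U y) ^ (-(1/2) : ℝ) := by
    funext y; rw [h1x y, mul_one]
  rw [hg1] at hmem1
  have hd1 := (hdisc _ hmem1).2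
  have hint1 : ∫ x, U x * ((U x) ^ (-(1/2) : ℝ)) ^ 2 ∂μ ≤ 1 := by
    have hle : ∀ y, U y * ((U y) ^ (-(1/2) : ℝ)) ^ 2 ≤ 1 := by
      intro y
      rcases eq_or_lt_of_le (hUnn y) with h | h
      · rw [← h]; norm_num
      · rw [hpowsq y h, mul_inv_cancel₀ (ne_of_gt h)]
    have hge : ∀ y, 0 ≤ U y * ((U y) ^ (-(1/2) : ℝ)) ^ 2 := by
      intro y
      exact mul_nonneg (hUnn y) (sq_nonneg _)
    calc ∫ x, U x * ((U x) ^ (-(1/2) : ℝ)) ^ 2 ∂μ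
        ≤ ∫ _, (1:ℝ) ∂μ :=
          integral_mono_of_nonneg (ae_of_all _ hge) (integrable_const 1) (ae_of_all _ hle)
      _ = 1 := by simp
  -- combine: bound on the weight sum
  have hwsum : ∑ j, lam j * ((U (ξ j)) ^ (-(1/2) : ℝ)) ^ 2 ≤ C₃ := by
    calc ∑ j, lam j * ((U (ξ j)) ^ (-(1/2) : ℝ)) ^ 2
        ≤ C₃ * ∫ x, U x * ((U x) ^ (-(1/2) : ℝ)) ^ 2 ∂μ := hd1
      _ ≤ C₃ * 1 := mul_le_mul_of_nonneg_left hint1 hC₃.le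
      _ = C₃ := mul_one _
  set M := Finset.univ.sup' (Finset.univ_nonempty_iff.mpr ⟨⟨0, hm⟩⟩)
    (fun j => |f (ξ j)|) with hM
  have hM0 : 0 ≤ M :=
    le_trans (abs_nonneg (f (ξ ⟨0, hm⟩)))
      (Finset.le_sup' (fun j => |f (ξ j)|) (Finset.mem_univ (⟨0, hm⟩ : Fin m)))
  have hMj : ∀ j, (f (ξ j)) ^ 2 ≤ M ^ 2 := by
    intro j
    have h1 : |f (ξ j)| ≤ M := Finset.le_sup' (fun j => |f (ξ j)|) (Finset.mem_univ j)
    nlinarith [abs_nonneg (f (ξ j)), sq_abs (f (ξ j))]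
  -- bound the discretization sum for f
  have hsum_le : ∑ j, lam j * ((U (ξ j)) ^ (-(1/2) : ℝ) * f (ξ j)) ^ 2
      ≤ M ^ 2 * ∑ j, lam j * ((U (ξ j)) ^ (-(1/2) : ℝ)) ^ 2 := by
    rw [Finset.mul_sum]
    refine Finset.sum_le_sum fun j _ => ?_
    have hl := hlam j
    have h2 := hMj j
    nlinarith [sq_nonneg ((U (ξ j)) ^ (-(1/2) : ℝ)),
      mul_nonneg hl (sq_nonneg ((U (ξ j)) ^ (-(1/2) : ℝ)))]
  -- conclude the norm bound
  have hnorm : ∑ k, (c k) ^ 2 ≤ C₃ / C₂ * M ^ 2 := by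
    have h1 := hdf.1
    rw [hintf] at h1
    have h2 : C₂ * ∑ k, (c k) ^ 2 ≤ M ^ 2 * C₃ :=
      le_trans h1 (le_trans hsum_le (mul_le_mul_of_nonneg_left hwsum (sq_nonneg M)))
    rw [div_mul_eq_mul_div, le_div_iff₀ hC₂]
    nlinarith
  -- Cauchy-Schwarz
  set S := ∑ k, (u k x) ^ 2 with hS
  have hCS : (f x) ^ 2 ≤ (∑ k, (c k) ^ 2) * S := by
    rw [hfx x]
    exact Finset.sum_mul_sq_le_sq_mul_sq Finset.univ c (fun k => u k x)
  have hS0 : 0 ≤ S := Finset.sum_nonneg fun k _ => sq_nonneg _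
  have hSpos : 0 < S := by
    rcases eq_or_lt_of_le hS0 with h | h
    · exfalso
      have : U x = 0 := by rw [hU]; simp [← hS, ← h]
      exact absurd hx (by rw [this]; exact lt_irrefl 0)
    · exact h
  -- final computation
  have hfinal : (f x) ^ 2 ≤ C₃ / C₂ * M ^ 2 * S :=
    le_trans hCS (mul_le_mul_of_nonneg_right hnorm hS0)
  rw [div_le_iff₀ (Real.sqrt_pos.mpr hSpos)]
  have hrhs : Real.sqrt (C₃ / C₂) * M * Real.sqrt S = Real.sqrt (C₃ / C₂ * M ^ 2 * S) := by
    rw [Real.sqrt_mul (mul_nonneg (div_nonneg hC₃.le hC₂.le) (sq_nonneg M)) S,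
      Real.sqrt_mul (div_nonneg hC₃.le hC₂.le) (M ^ 2), Real.sqrt_sq hM0]
  calc |f x| = Real.sqrt ((f x) ^ 2) := (Real.sqrt_sq_eq_abs _).symm
    _ ≤ Real.sqrt (C₃ / C₂ * M ^ 2 * S) := Real.sqrt_le_sqrt hfinal
    _ = Real.sqrt (C₃ / C₂) * M * Real.sqrt S := hrhs.symm
end

section
/- Let q ∈ (1, ∞), let μ be a probability measure on Ω, and let f₁, f₂ be measurable with ‖f_i‖_q^q ≤ 1/2, ‖f_i‖_∞ ≤ M_q for i = 1,2, and ‖f₁ − f₂‖_∞ ≤ δ. For z = (x¹, …, x^m) ∈ Ω^m with x^j i.i.d. ∼ μ, define L_z^q(f) = (1/m)Σ_{j=1}^m |f(x^j)|^q − ‖f‖_q^q. Then μ^m{z : |L_z^q(f₁) − L_z^q(f₂)| ≥ η} < 2·exp(−m·η²/(16·q·M_q^{q−1}·δ)) for every η ∈ (0,1). -/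
/-! With `h = |f₁|^q - |f₂|^q`, the mean value theorem gives `|h| ≤ C := q Mq^(q-1) δ`, and
`‖h‖₁ ≤ ‖f₁‖_q^q + ‖f₂‖_q^q ≤ 1`; hence `g = h - E h` is centred with `|g| ≤ 2C`, `‖g‖₁ ≤ 2`, and
`m (L_z f₁ - L_z f₂) = ∑ⱼ g(xʲ)`. For a centred `g` with `|g| ≤ M` and `‖g‖₁ ≤ 2`, the Taylor
bound `eʸ ≤ 1 + y + (13/18) y²` on `|y| ≤ 1` together with `g² ≤ M |g|` gives
`E e^{tg} ≤ exp ((13/9) t² M)`, and the Chernoff bound at `t = η / (4M)` bounds each tail of the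
i.i.d. sum by `exp (-23 m η² / (144 M))`. With `M = 2C` this exponent beats `m η² / (16 C)`
strictly. -/

open MeasureTheory ProbabilityTheory Real

lemma abs_rpow_sub_rpow_le {q C x y : ℝ} (hq : 1 ≤ q) (hx : x ∈ Set.Icc 0 C)
    (hy : y ∈ Set.Icc 0 C) : |x ^ q - y ^ q| ≤ q * C ^ (q - 1) * |x - y| := by
  have hderiv_le : ∀ z ∈ Set.Icc 0 C, ‖q * z ^ (q - 1)‖ ≤ q * C ^ (q - 1) := fun z hz => by
    rw [norm_of_nonneg (by have := hz.1; positivity)]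
    exact mul_le_mul_of_nonneg_left (rpow_le_rpow hz.1 hz.2 (by linarith)) (by linarith)
  simpa only [norm_eq_abs] using Convex.norm_image_sub_le_of_norm_hasDerivWithin_le
    (fun z _ => (hasDerivAt_rpow_const (Or.inr hq)).hasDerivWithinAt) hderiv_le
    (convex_Icc 0 C) hy hx

lemma exp_le_one_add_add_mul_sq {y : ℝ} (hy : |y| ≤ 1) : exp y ≤ 1 + y + 13 / 18 * y ^ 2 := by
  have htaylor := exp_bound hy (n := 3) (by norm_num)
  norm_num [Finset.sum_range_succ, Nat.factorial] at htaylor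
  have hcube : |y| ^ 3 ≤ y ^ 2 := by
    rw [← sq_abs y]; exact pow_le_pow_of_le_one (abs_nonneg y) hy (by norm_num)
  linarith [(abs_le.mp htaylor).2]

lemma mgf_sum_pi {Ω ι : Type*} [MeasurableSpace Ω] [Fintype ι] (μ : Measure Ω) [SigmaFinite μ]
    (g : Ω → ℝ) (t : ℝ) :
    mgf (fun z : ι → Ω => ∑ j, g (z j)) (Measure.pi fun _ => μ) t =
      mgf g μ t ^ Fintype.card ι := by
  simp only [mgf, Finset.mul_sum, exp_sum]
  exact integral_fintype_prod_eq_pow (ι := ι) (μ := μ) (fun x => exp (t * g x))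

lemma integrable_abs_rpow_of_abs_le {Ω : Type*} [MeasurableSpace Ω] {μ : Measure Ω}
    [IsFiniteMeasure μ] {f : Ω → ℝ} {C q : ℝ} (hf : Measurable f) (hb : ∀ x, |f x| ≤ C)
    (hq : 0 ≤ q) : Integrable (fun x => |f x| ^ q) μ :=
  .of_bound (by fun_prop : Measurable _).aestronglyMeasurable (C ^ q) (.of_forall fun x => by
    rw [norm_of_nonneg (by positivity)]
    exact rpow_le_rpow (abs_nonneg _) (hb x) hq)

section Bernstein

variable {Ω : Type*} [MeasurableSpace Ω] {μ : Measure Ω} [IsProbabilityMeasure μ]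
  {g : Ω → ℝ} {M : ℝ}

lemma mgf_le_exp_of_abs_le (hg : Measurable g) (hb : ∀ x, |g x| ≤ M) (hmean : μ[g] = 0)
    {t : ℝ} (ht : 0 ≤ t) (htM : t * M ≤ 1) :
    mgf g μ t ≤ exp (13 / 18 * t ^ 2 * M * ∫ x, |g x| ∂μ) := by
  have hint : Integrable g μ :=
    .of_bound hg.aestronglyMeasurable M (.of_forall fun x => hb x)
  have hpointwise : ∀ x, exp (t * g x) ≤ 1 + t * g x + 13 / 18 * t ^ 2 * M * |g x| := by
    intro x
    have hty : |t * g x| ≤ 1 := by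
      rw [abs_mul, abs_of_nonneg ht]
      exact (mul_le_mul_of_nonneg_left (hb x) ht).trans htM
    have hsq : (t * g x) ^ 2 ≤ t ^ 2 * M * |g x| := by
      rw [mul_pow, ← sq_abs (g x), mul_assoc]
      gcongr
      nlinarith [hb x, abs_nonneg (g x)]
    linarith [exp_le_one_add_add_mul_sq hty]
  have hint_rhs : Integrable (fun x => 1 + t * g x + 13 / 18 * t ^ 2 * M * |g x|) μ :=
    ((integrable_const 1).add (hint.const_mul t)).add (hint.abs.const_mul _)
  calc mgf g μ t ≤ ∫ x, (1 + t * g x + 13 / 18 * t ^ 2 * M * |g x|) ∂μ :=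
        integral_mono_of_nonneg (.of_forall fun x => (exp_pos _).le) hint_rhs
          (.of_forall hpointwise)
    _ = 1 + 13 / 18 * t ^ 2 * M * ∫ x, |g x| ∂μ := by
        rw [integral_add (f := fun x => 1 + t * g x)
            ((integrable_const 1).add (hint.const_mul t)) (hint.abs.const_mul _),
          integral_add (integrable_const 1) (hint.const_mul t), integral_const_mul,
          integral_const_mul, hmean]
        simp
    _ ≤ exp (13 / 18 * t ^ 2 * M * ∫ x, |g x| ∂μ) := by
        linarith [add_one_le_exp (13 / 18 * t ^ 2 * M * ∫ x, |g x| ∂μ)]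

lemma measureReal_sum_ge_le (hg : Measurable g) (hb : ∀ x, |g x| ≤ M) (hmean : μ[g] = 0)
    (hL1 : ∫ x, |g x| ∂μ ≤ 2) (hM : 0 < M) (m : ℕ) {η : ℝ} (hη0 : 0 ≤ η) (hη4 : η ≤ 4) :
    (Measure.pi fun _ : Fin m => μ).real {z | m * η ≤ ∑ j, g (z j)} ≤
      exp (-(23 / 144) * m * η ^ 2 / M) := by
  set t := η / (4 * M)
  have ht : 0 ≤ t := by positivity
  have htM : t * M ≤ 1 := by
    have : t * M = η / 4 := by simp only [t]; field_simp
    linarith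
  have hint : Integrable (fun z => exp (t * ∑ j, g (z j))) (Measure.pi fun _ : Fin m => μ) := by
    refine .of_bound (by fun_prop : Measurable _).aestronglyMeasurable (exp (t * (m * M)))
      (.of_forall fun z => ?_)
    rw [norm_of_nonneg (exp_pos _).le, exp_le_exp]
    gcongr
    calc ∑ j, g (z j) ≤ ∑ _j : Fin m, M := Finset.sum_le_sum fun j _ => (abs_le.mp (hb _)).2
      _ = m * M := by simp
  have hmgf : mgf g μ t ≤ exp (13 / 9 * t ^ 2 * M) :=
    (mgf_le_exp_of_abs_le hg hb hmean ht htM).trans (exp_le_exp.mpr (by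
      have : 0 ≤ t ^ 2 * M := by positivity
      nlinarith))
  calc _ ≤ exp (-t * (m * η)) * mgf g μ t ^ m := by
        simpa [mgf_sum_pi] using measure_ge_le_exp_mul_mgf _ ht hint
    _ ≤ exp (-t * (m * η)) * exp (13 / 9 * t ^ 2 * M) ^ m := by
        gcongr
        exact mgf_nonneg
    _ = exp (-(23 / 144) * m * η ^ 2 / M) := by
        rw [← exp_nat_mul, ← exp_add]
        congr 1
        simp only [t]
        field_simp
        ring

lemma measureReal_abs_sum_ge_le (hg : Measurable g) (hb : ∀ x, |g x| ≤ M) (hmean : μ[g] = 0)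
    (hL1 : ∫ x, |g x| ∂μ ≤ 2) (hM : 0 < M) (m : ℕ) {η : ℝ} (hη0 : 0 ≤ η) (hη4 : η ≤ 4) :
    (Measure.pi fun _ : Fin m => μ).real {z | m * η ≤ |∑ j, g (z j)|} ≤
      2 * exp (-(23 / 144) * m * η ^ 2 / M) := by
  have hsplit : {z : Fin m → Ω | m * η ≤ |∑ j, g (z j)|} =
      {z | m * η ≤ ∑ j, g (z j)} ∪ {z | m * η ≤ ∑ j, -g (z j)} := by
    ext z
    simp only [Set.mem_ofPred_eq, Set.mem_union, le_abs, Finset.sum_neg_distrib]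
  have hneg := measureReal_sum_ge_le (g := fun x => -g x) hg.neg (by simpa using hb)
    (by rw [integral_neg, hmean, neg_zero]) (by simpa using hL1) hM m hη0 hη4
  rw [hsplit, two_mul]
  exact (measureReal_union_le _ _).trans
    (add_le_add (measureReal_sum_ge_le hg hb hmean hL1 hM m hη0 hη4) hneg)

lemma measureReal_abs_sum_sub_integral_ge_le (hg : Measurable g) (hb : ∀ x, |g x| ≤ M)
    (hL1 : ∫ x, |g x| ∂μ ≤ 1) (hM : 0 < M) (m : ℕ) {η : ℝ} (hη0 : 0 ≤ η) (hη4 : η ≤ 4) :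
    (Measure.pi fun _ : Fin m => μ).real {z | m * η ≤ |∑ j, (g (z j) - μ[g])|} ≤
      2 * exp (-(23 / 144) * m * η ^ 2 / (2 * M)) := by
  have hint : Integrable g μ :=
    .of_bound (f := g) hg.aestronglyMeasurable M (.of_forall fun x => hb x)
  have hmean_le : |μ[g]| ≤ ∫ x, |g x| ∂μ := abs_integral_le_integral_abs
  have hmean_le_M : |μ[g]| ≤ M := by
    simpa using norm_integral_le_of_norm_le_const (μ := μ) (f := g) (.of_forall fun x => hb x)
  have hcentered : ∫ x, (g x - μ[g]) ∂μ = 0 := by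
    rw [integral_sub hint (integrable_const _)]
    simp
  have hL1_centered : ∫ x, |g x - μ[g]| ∂μ ≤ 2 := calc
    _ ≤ ∫ x, (|g x| + |μ[g]|) ∂μ :=
        integral_mono (hint.sub (integrable_const _)).abs
          (hint.abs.add (integrable_const _)) fun x => abs_sub _ _
    _ = ∫ x, |g x| ∂μ + |μ[g]| := by
        rw [integral_add hint.abs (integrable_const _)]
        simp
    _ ≤ 2 := by linarith
  exact measureReal_abs_sum_ge_le (hg.sub measurable_const)
    (fun x => (abs_sub _ _).trans (by linarith [hb x])) hcentered hL1_centered (by linarith) m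
    hη0 hη4

end Bernstein

theorem chaining_step_concentration
    {Ω : Type*} [MeasurableSpace Ω] (μ : Measure Ω) [IsProbabilityMeasure μ]
    (q : ℝ) (hq : 1 < q)
    (f₁ f₂ : Ω → ℝ) (hm₁ : Measurable f₁) (hm₂ : Measurable f₂)
    (Mq δ : ℝ) (hMq : 0 < Mq) (hδ : 0 < δ)
    (hq₁ : ∫ x, |f₁ x| ^ q ∂μ ≤ 1/2) (hq₂ : ∫ x, |f₂ x| ^ q ∂μ ≤ 1/2)
    (hb₁ : ∀ x, |f₁ x| ≤ Mq) (hb₂ : ∀ x, |f₂ x| ≤ Mq)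
    (hdiff : ∀ x, |f₁ x - f₂ x| ≤ δ)
    (m : ℕ) (hm : 0 < m)
    (L : (Ω → ℝ) → (Fin m → Ω) → ℝ)
    (hL : ∀ f z, L f z = (1 / m) * ∑ j, |f (z j)| ^ q - ∫ x, |f x| ^ q ∂μ)
    (η : ℝ) (hη : η ∈ Set.Ioo (0 : ℝ) 1) :
    (Measure.pi fun _ : Fin m => μ) {z | η ≤ |L f₁ z - L f₂ z|} <
      ENNReal.ofReal (2 * Real.exp (-(m * η ^ 2) / (16 * q * Mq ^ (q - 1) * δ))) := by
  obtain ⟨hη0, hη1⟩ := hη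
  have hint₁ := integrable_abs_rpow_of_abs_le (μ := μ) hm₁ hb₁ (by linarith : 0 ≤ q)
  have hint₂ := integrable_abs_rpow_of_abs_le (μ := μ) hm₂ hb₂ (by linarith : 0 ≤ q)
  set h : Ω → ℝ := fun x => |f₁ x| ^ q - |f₂ x| ^ q
  have hh : ∀ x, |h x| ≤ q * Mq ^ (q - 1) * δ := fun x =>
    (abs_rpow_sub_rpow_le hq.le ⟨abs_nonneg _, hb₁ x⟩ ⟨abs_nonneg _, hb₂ x⟩).trans <| by
      gcongr; exact (abs_abs_sub_abs_le_abs_sub _ _).trans (hdiff x)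
  have hL1 : ∫ x, |h x| ∂μ ≤ 1 := calc
    _ ≤ ∫ x, (|f₁ x| ^ q + |f₂ x| ^ q) ∂μ :=
        integral_mono (hint₁.sub hint₂).abs (hint₁.add hint₂) fun x => by
          simpa only [Pi.sub_apply, abs_of_nonneg (rpow_nonneg (abs_nonneg _) q)]
            using abs_sub (|f₁ x| ^ q) (|f₂ x| ^ q)
    _ ≤ 1 := by rw [integral_add hint₁ hint₂]; linarith
  have hevent : {z | η ≤ |L f₁ z - L f₂ z|} = {z | m * η ≤ |∑ j, (h (z j) - μ[h])|} := by
    ext z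
    have hsum : ∑ j, (h (z j) - μ[h]) = m * (L f₁ z - L f₂ z) := by
      simp only [hL, h, integral_sub hint₁ hint₂, Finset.sum_sub_distrib,
        Finset.sum_const, Finset.card_univ, Fintype.card_fin, nsmul_eq_mul]
      field_simp
      ring
    rw [Set.mem_ofPred_eq, Set.mem_ofPred_eq, hsum, abs_mul, Nat.abs_cast,
      mul_le_mul_iff_right₀ (by exact_mod_cast hm)]
  have hexponent : -(23 / 144) * m * η ^ 2 / (2 * (q * Mq ^ (q - 1) * δ)) <
      -(m * η ^ 2) / (16 * q * Mq ^ (q - 1) * δ) := by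
    have : 0 < m * η ^ 2 / (q * Mq ^ (q - 1) * δ) := by positivity
    field_simp
    nlinarith
  rw [hevent, ← ofReal_measureReal, ENNReal.ofReal_lt_ofReal_iff (by positivity)]
  exact (measureReal_abs_sum_sub_integral_ge_le (by fun_prop) hh hL1 (by positivity) m hη0.le
    (by linarith)).trans_lt (by gcongr)
end

section
/- Let (Ω, μ) be a probability space, q ∈ [2, ∞), X_N a subspace of functions satisfying ‖f‖_∞ ≤ H‖f‖_q for all f ∈ X_N, and fix points x₁, …, x_m ∈ Ω. Then for any f, g in the unit ball X_N^q = {f ∈ X_N : ‖f‖_q ≤ 1}, (Σ_{j=1}^m ||f(x_j)|^q − |g(x_j)|^q|²)^{1/2} ≤ 2q·H^{q/2−1}·‖f − g‖_∞·sup_{h∈X_N^q}(Σ_{j=1}^m |h(x_j)|^q)^{1/2}. -/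
open MeasureTheory

lemma aux_mvt {q : ℝ} (hq : 1 ≤ q) {a b : ℝ} (hb : 0 ≤ b) (hba : b ≤ a) :
    a ^ q - b ^ q ≤ q * a ^ (q - 1) * (a - b) := by
  rcases eq_or_lt_of_le hba with rfl | h
  · simp
  · obtain ⟨c, hc, hc'⟩ := exists_hasDerivAt_eq_slope (fun y : ℝ => y ^ q)
      (fun y : ℝ => q * y ^ (q - 1)) h
      (Continuous.continuousOn (continuous_iff_continuousAt.2 fun y =>
        Real.continuousAt_rpow_const y q (Or.inr (by linarith))))
      (fun y _ => Real.hasDerivAt_rpow_const (Or.inr hq))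
    have hc0 : 0 ≤ c := le_trans hb hc.1.le
    have heq : a ^ q - b ^ q = q * c ^ (q - 1) * (a - b) := by
      rw [hc', div_mul_cancel₀ _ (sub_ne_zero.2 h.ne')]
    rw [heq]
    have hcq : c ^ (q - 1) ≤ a ^ (q - 1) :=
      Real.rpow_le_rpow hc0 hc.2.le (by linarith)
    exact mul_le_mul_of_nonneg_right (mul_le_mul_of_nonneg_left hcq (by linarith))
      (by linarith)

lemma aux_abs {q : ℝ} (hq : 1 ≤ q) {a b : ℝ} (ha : 0 ≤ a) (hb : 0 ≤ b) :
    |a ^ q - b ^ q| ≤ q * (max a b) ^ (q - 1) * |a - b| := by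
  rcases le_total b a with h | h
  · rw [abs_of_nonneg (sub_nonneg.2 (Real.rpow_le_rpow hb h (by linarith))),
      abs_of_nonneg (sub_nonneg.2 h), max_eq_left h]
    exact aux_mvt hq hb h
  · rw [abs_sub_comm, abs_sub_comm a b,
      abs_of_nonneg (sub_nonneg.2 (Real.rpow_le_rpow ha h (by linarith))),
      abs_of_nonneg (sub_nonneg.2 h), max_eq_right h]
    exact aux_mvt hq ha h

theorem bernoulli_process_lipschitz_bound
    {Ω : Type*} [MeasurableSpace Ω] (μ : Measure Ω) [IsProbabilityMeasure μ]
    (q : ℝ) (hq : 2 ≤ q)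
    (X : Submodule ℝ (Ω → ℝ)) (H : ℝ) (hH : 1 ≤ H)
    (hNik : ∀ f ∈ X, ∀ x : Ω, |f x| ≤ H * (∫ z, |f z| ^ q ∂μ) ^ (1/q))
    (m : ℕ) (x : Fin m → Ω)
    (f g : Ω → ℝ) (hf : f ∈ X) (hg : g ∈ X)
    (hfq : ∫ z, |f z| ^ q ∂μ ≤ 1) (hgq : ∫ z, |g z| ^ q ∂μ ≤ 1)
    (δ : ℝ) (hδ : ∀ z, |f z - g z| ≤ δ) :
    Real.sqrt (∑ j, (|f (x j)| ^ q - |g (x j)| ^ q) ^ 2) ≤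
      2 * q * H ^ (q / 2 - 1) * δ *
        sSup {y : ℝ | ∃ h ∈ X, (∫ z, |h z| ^ q ∂μ) ≤ 1 ∧
          y = Real.sqrt (∑ j, |h (x j)| ^ q)} := by
  have hq1 : (1:ℝ) ≤ q := by linarith
  have hq0 : (0:ℝ) ≤ q := by linarith
  have hH0 : (0:ℝ) < H := by linarith
  -- Ω is nonempty
  have hΩ : Nonempty Ω := by
    by_contra hempty
    have : (Set.univ : Set Ω) = ∅ := Set.univ_eq_empty_iff.2 (not_nonempty_iff.1 hempty)
    have h1 : μ Set.univ = 1 := measure_univ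
    rw [this, measure_empty] at h1
    exact zero_ne_one h1
  obtain ⟨z0⟩ := hΩ
  have hδ0 : 0 ≤ δ := le_trans (abs_nonneg _) (hδ z0)
  -- key facts about elements of X in the unit ball
  have hbound : ∀ h : Ω → ℝ, h ∈ X → (∫ z, |h z| ^ q ∂μ) ≤ 1 → ∀ z, |h z| ≤ H := by
    intro h hX hint z
    have hnn : 0 ≤ ∫ z, |h z| ^ q ∂μ :=
      integral_nonneg fun z => Real.rpow_nonneg (abs_nonneg _) q
    calc |h z| ≤ H * (∫ z, |h z| ^ q ∂μ) ^ (1/q) := hNik h hX z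
      _ ≤ H * 1 := by
          apply mul_le_mul_of_nonneg_left _ hH0.le
          exact Real.rpow_le_one hnn hint (by positivity)
      _ = H := mul_one H
  -- the set defining the sup
  set Sset := {y : ℝ | ∃ h ∈ X, (∫ z, |h z| ^ q ∂μ) ≤ 1 ∧
      y = Real.sqrt (∑ j, |h (x j)| ^ q)} with hSset
  set S := sSup Sset with hS
  have hbdd : BddAbove Sset := by
    refine ⟨Real.sqrt (m * H ^ q), ?_⟩
    rintro y ⟨h, hX, hint, rfl⟩
    apply Real.sqrt_le_sqrt
    calc ∑ j, |h (x j)| ^ q ≤ ∑ _j : Fin m, H ^ q := by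
          apply Finset.sum_le_sum
          intro j _
          exact Real.rpow_le_rpow (abs_nonneg _) (hbound h hX hint (x j)) hq0
      _ = m * H ^ q := by simp [Finset.sum_const, nsmul_eq_mul]
  have hfS : Real.sqrt (∑ j, |f (x j)| ^ q) ≤ S :=
    le_csSup hbdd ⟨f, hf, hfq, rfl⟩
  have hgS : Real.sqrt (∑ j, |g (x j)| ^ q) ≤ S :=
    le_csSup hbdd ⟨g, hg, hgq, rfl⟩
  have hS0 : 0 ≤ S := le_trans (Real.sqrt_nonneg _) hfS
  have hfA : ∑ j, |f (x j)| ^ q ≤ S ^ 2 := by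
    have := Real.sq_sqrt (Finset.sum_nonneg fun j _ =>
      Real.rpow_nonneg (abs_nonneg _) q : (0:ℝ) ≤ ∑ j, |f (x j)| ^ q)
    nlinarith [Real.sqrt_nonneg (∑ j, |f (x j)| ^ q)]
  have hgA : ∑ j, |g (x j)| ^ q ≤ S ^ 2 := by
    have := Real.sq_sqrt (Finset.sum_nonneg fun j _ =>
      Real.rpow_nonneg (abs_nonneg _) q : (0:ℝ) ≤ ∑ j, |g (x j)| ^ q)
    nlinarith [Real.sqrt_nonneg (∑ j, |g (x j)| ^ q)]
  -- pointwise bound on each term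
  have hterm : ∀ j : Fin m, (|f (x j)| ^ q - |g (x j)| ^ q) ^ 2 ≤
      q ^ 2 * δ ^ 2 * H ^ (q - 2) * (|f (x j)| ^ q + |g (x j)| ^ q) := by
    intro j
    set a := |f (x j)| with ha
    set b := |g (x j)| with hb
    have ha0 : 0 ≤ a := abs_nonneg _
    have hb0 : 0 ≤ b := abs_nonneg _
    have hM0 : 0 ≤ max a b := le_trans ha0 (le_max_left _ _)
    have h1 : |a ^ q - b ^ q| ≤ q * (max a b) ^ (q - 1) * |f (x j) - g (x j)| := by
      have := aux_abs hq1 ha0 hb0 (a := a) (b := b)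
      refine le_trans this ?_
      have : |a - b| ≤ |f (x j) - g (x j)| := abs_abs_sub_abs_le_abs_sub _ _
      exact mul_le_mul_of_nonneg_left this (by positivity)
    have h2 : |a ^ q - b ^ q| ≤ q * (max a b) ^ (q - 1) * δ :=
      le_trans h1 (mul_le_mul_of_nonneg_left (hδ (x j)) (by positivity))
    have hsq : (a ^ q - b ^ q) ^ 2 ≤ (q * (max a b) ^ (q - 1) * δ) ^ 2 :=
      sq_le_sq' (by linarith [neg_abs_le (a ^ q - b ^ q)])
        (by linarith [le_abs_self (a ^ q - b ^ q)])
    -- bound (max a b)^(2(q-1)) ≤ H^(q-2) * (a^q + b^q)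
    have hMH : max a b ≤ H := by
      rcases max_cases a b with ⟨h, _⟩ | ⟨h, _⟩ <;> rw [h]
      · exact hbound f hf hfq (x j)
      · exact hbound g hg hgq (x j)
    have hM2 : ((max a b) ^ (q - 1)) ^ 2 ≤ H ^ (q - 2) * (a ^ q + b ^ q) := by
      have e1 : ((max a b) ^ (q - 1)) ^ 2 = (max a b) ^ (q - 2) * (max a b) ^ q := by
        rw [← Real.rpow_natCast ((max a b) ^ (q-1)) 2, ← Real.rpow_mul hM0,
          ← Real.rpow_add' hM0 (by intro hcon; linarith)]
        norm_num
        ring_nf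
      rw [e1]
      have e2 : (max a b) ^ (q - 2) ≤ H ^ (q - 2) :=
        Real.rpow_le_rpow hM0 hMH (by linarith)
      have e3 : (max a b) ^ q ≤ a ^ q + b ^ q := by
        rcases max_cases a b with ⟨h, _⟩ | ⟨h, _⟩ <;> rw [h]
        · nlinarith [Real.rpow_nonneg hb0 q]
        · nlinarith [Real.rpow_nonneg ha0 q]
      have := mul_le_mul e2 e3 (Real.rpow_nonneg hM0 q)
        (Real.rpow_nonneg hH0.le (q-2))
      exact this
    calc (a ^ q - b ^ q) ^ 2 ≤ (q * (max a b) ^ (q - 1) * δ) ^ 2 := hsq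
      _ = q ^ 2 * δ ^ 2 * ((max a b) ^ (q - 1)) ^ 2 := by ring
      _ ≤ q ^ 2 * δ ^ 2 * (H ^ (q - 2) * (a ^ q + b ^ q)) := by
          exact mul_le_mul_of_nonneg_left hM2 (by positivity)
      _ = q ^ 2 * δ ^ 2 * H ^ (q - 2) * (a ^ q + b ^ q) := by ring
  -- sum the termwise bound
  have hsum : ∑ j, (|f (x j)| ^ q - |g (x j)| ^ q) ^ 2 ≤
      q ^ 2 * δ ^ 2 * H ^ (q - 2) * (2 * S ^ 2) := by
    calc ∑ j, (|f (x j)| ^ q - |g (x j)| ^ q) ^ 2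
        ≤ ∑ j, q ^ 2 * δ ^ 2 * H ^ (q - 2) * (|f (x j)| ^ q + |g (x j)| ^ q) :=
          Finset.sum_le_sum fun j _ => hterm j
      _ = q ^ 2 * δ ^ 2 * H ^ (q - 2) *
          ((∑ j, |f (x j)| ^ q) + (∑ j, |g (x j)| ^ q)) := by
          rw [← Finset.mul_sum, Finset.sum_add_distrib]
      _ ≤ q ^ 2 * δ ^ 2 * H ^ (q - 2) * (2 * S ^ 2) := by
          apply mul_le_mul_of_nonneg_left _ (by positivity)
          linarith
  -- conclude
  have hRHS0 : 0 ≤ 2 * q * H ^ (q / 2 - 1) * δ * S := by positivity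
  rw [← Real.sqrt_sq hRHS0]
  apply Real.sqrt_le_sqrt
  refine le_trans hsum ?_
  have hHe : (H ^ (q / 2 - 1)) ^ 2 = H ^ (q - 2) := by
    rw [← Real.rpow_natCast (H ^ (q/2 - 1)) 2, ← Real.rpow_mul hH0.le]
    norm_num
    ring_nf
  have expand : (2 * q * H ^ (q / 2 - 1) * δ * S) ^ 2 =
      4 * (q ^ 2 * δ ^ 2 * H ^ (q - 2) * S ^ 2) := by
    rw [← hHe]; ring
  rw [expand]
  nlinarith [sq_nonneg S, mul_nonneg (mul_nonneg (sq_nonneg q) (sq_nonneg δ))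
    (Real.rpow_nonneg hH0.le (q-2))]
end

section
/- Let f be a continuous 2π-periodic function on 𝕋^d. Assume there exists a finite set {x^j}_{j=1}^m ⊂ 𝕋^d such that for every y ∈ 𝕋^d the translate f_y(x) := f(x − y) satisfies ‖f_y‖_∞ ≤ D·max_{1≤j≤m}|f_y(x^j)|. Then for any measurable set B ⊂ 𝕋^d with |B| < 1/m (normalized Lebesgue measure), ‖f‖_{L_∞(𝕋^d)} ≤ D·‖f‖_{L_∞(𝕋^d \ B)}. -/
/-!
Fix `z`. For a translation parameter `y`, the discretization hypothesis bounds `|f z|` by `D` times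
the values of `f` at the `m` points `x j + y`. The set of `y` for which some `x j + y` lies in `B` is
a union of `m` translates of `B`, of total measure at most `m |B| < 1`; so some `y` puts all of the
points outside `B`, where `|f|` is at most its supremum over the complement of `B`.
-/

open MeasureTheory

theorem exists_forall_add_notMem_of_card_mul_measure_lt {G ι : Type*} [AddGroup G]
    [MeasurableSpace G] [MeasurableAdd G] (μ : Measure G) [μ.IsAddLeftInvariant] [Fintype ι]
    (x : ι → G) {B : Set G} (hB : Fintype.card ι * μ B < μ Set.univ) :
    ∃ y, ∀ j, x j + y ∉ B := by
  by_contra! hcover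
  have hunion : Set.univ ⊆ ⋃ j, (fun y => x j + y) ⁻¹' B := fun y _ => by
    simpa using hcover y
  refine hB.not_ge ((measure_mono hunion).trans ?_)
  calc μ (⋃ j, (fun y => x j + y) ⁻¹' B) ≤ ∑ j, μ ((fun y => x j + y) ⁻¹' B) :=
        measure_iUnion_fintype_le _ _
    _ = Fintype.card ι * μ B := by simp [measure_preimage_add]

theorem abs_le_mul_sSup_compl_of_forall_sub_notMem {G ι : Type*} [AddCommGroup G] [Fintype ι]
    (hι : (Finset.univ : Finset ι).Nonempty) {f : G → ℝ} {D : ℝ} (hD : 0 ≤ D) (x : ι → G)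
    (hdisc : ∀ y z, |f (z - y)| ≤ D * Finset.univ.sup' hι (fun j => |f (x j - y)|))
    {B : Set G} {y : G} (hy : ∀ j, x j - y ∉ B) (z : G) :
    |f z| ≤ D * sSup ((fun w => |f w|) '' Bᶜ) := by
  have hbdd : BddAbove ((fun w => |f w|) '' Bᶜ) := by
    refine ⟨D * Finset.univ.sup' hι (fun j => |f (x j - 0)|), ?_⟩
    rintro _ ⟨w, -, rfl⟩
    simpa using hdisc 0 w
  calc |f z| = |f ((z + y) - y)| := by rw [add_sub_cancel_right]
    _ ≤ D * Finset.univ.sup' hι (fun j => |f (x j - y)|) := hdisc y (z + y)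
    _ ≤ D * sSup ((fun w => |f w|) '' Bᶜ) := by
      gcongr
      exact Finset.sup'_le _ _ fun j _ => le_csSup hbdd ⟨x j - y, hy j, rfl⟩

theorem AddCircle.inv_smul_volume_eq_haarAddCircle {T : ℝ} [Fact (0 < T)] :
    (ENNReal.ofReal T)⁻¹ • (volume : Measure (AddCircle T)) = haarAddCircle := by
  rw [volume_eq_smul_haarAddCircle, smul_smul, ENNReal.inv_mul_cancel
    (ENNReal.ofReal_pos.mpr Fact.out).ne' ENNReal.ofReal_ne_top, one_smul]

set_option synthInstance.maxHeartbeats 400000 in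
theorem remez_from_translated_discretization_general
    [Fact (0 < 2 * Real.pi)]
    (d : ℕ) (f : (Fin d → AddCircle (2 * Real.pi)) → ℝ)
    (D : ℝ) (hD : 1 ≤ D) (m : ℕ) (hm : 0 < m)
    (x : Fin m → Fin d → AddCircle (2 * Real.pi))
    (hdisc : ∀ y z : Fin d → AddCircle (2 * Real.pi),
      |f (z - y)| ≤ D * Finset.univ.sup' (Finset.univ_nonempty_iff.mpr ⟨⟨0, hm⟩⟩)
        (fun j => |f (x j - y)|))
    (B : Set (Fin d → AddCircle (2 * Real.pi)))
    (hBsmall :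
      (Measure.pi fun _ : Fin d => (ENNReal.ofReal (2 * Real.pi))⁻¹ • volume) B
        < 1 / m) :
    ∀ z, |f z| ≤ D * sSup ((fun w => |f w|) '' Bᶜ) := by
  simp only [AddCircle.inv_smul_volume_eq_haarAddCircle] at hBsmall
  obtain ⟨y, hy⟩ := exists_forall_add_notMem_of_card_mul_measure_lt
    (Measure.pi fun _ => AddCircle.haarAddCircle) x (B := B) (by
      rw [measure_univ, Fintype.card_fin]
      exact ENNReal.mul_lt_of_lt_div' hBsmall)
  exact abs_le_mul_sSup_compl_of_forall_sub_notMem _ (by linarith) x hdisc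
    (y := -y) (by simpa only [sub_neg_eq_add] using hy)

set_option synthInstance.maxHeartbeats 400000 in
theorem remez_from_translated_discretization
    [Fact (0 < 2 * Real.pi)]
    (d : ℕ) (f : (Fin d → AddCircle (2 * Real.pi)) → ℝ) (hf : Continuous f)
    (D : ℝ) (hD : 1 ≤ D) (m : ℕ) (hm : 0 < m)
    (x : Fin m → Fin d → AddCircle (2 * Real.pi))
    (hdisc : ∀ y z : Fin d → AddCircle (2 * Real.pi),
      |f (z - y)| ≤ D * Finset.univ.sup' (Finset.univ_nonempty_iff.mpr ⟨⟨0, hm⟩⟩)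
        (fun j => |f (x j - y)|))
    (B : Set (Fin d → AddCircle (2 * Real.pi))) (hB : MeasurableSet B)
    (hBsmall :
      (Measure.pi fun _ : Fin d => (ENNReal.ofReal (2 * Real.pi))⁻¹ • volume) B
        < 1 / m) :
    ∀ z, |f z| ≤ D * sSup ((fun w => |f w|) '' Bᶜ) :=
  remez_from_translated_discretization_general d f D hD m hm x hdisc B hBsmall
end

section
/- Let Q ⊂ ℤ^d be finite with |Q| = N and let 𝒯(Q) be the span of the exponentials e^{i⟨k,x⟩}, k ∈ Q, on 𝕋^d. Suppose there exist m points x¹,…,x^m ∈ 𝕋^d such that ‖f‖_∞ ≤ D·max_j|f(x^j)| for all f ∈ 𝒯(Q). Then for any measurable B ⊂ 𝕋^d with |B| < 1/m, every f ∈ 𝒯(Q) satisfies ‖f‖_{L_∞(𝕋^d)} ≤ D·‖f‖_{L_∞(𝕋^d \ B)}. -/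
/-! Realise 𝕋^d as `ι → AddCircle (2π)`, which carries a translation-invariant measure of total
mass `(2π)^d`, and lift `B` to the torus through the representatives in `[0, 2π)^d`. For a random
translate `η`, each node `x j + η` falls into the lifted `B` with probability `|B|`, so the expected
number of nodes in it is `m |B| < 1`: some translate `η = y mod 2π` puts every node outside `B`.
Trigonometric polynomials are `2π`-periodic in each variable and `𝒯(Q)` is translation invariant,
so the discretization inequality for `f (· + y)` gives
`|f z| ≤ D max_j |f (x j + y)| ≤ D sup_{[0, 2π)^d \ B} |f|`. -/

open MeasureTheory Set Real

noncomputable def trigMonomial {ι : Type*} [Fintype ι] (k : ι → ℤ) (y : ι → ℝ) : ℂ :=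
  Complex.exp (Complex.I * ∑ i, (k i : ℂ) * (y i : ℂ))

def toTorus {ι : Type*} (p : ℝ) (w : ι → ℝ) : ι → AddCircle p := fun i => (w i : AddCircle p)

theorem toTorus_add {ι : Type*} (p : ℝ) (w y : ι → ℝ) :
    toTorus p (w + y) = toTorus p w + toTorus p y := rfl

section TrigMonomial

variable {ι : Type*} [Fintype ι]

theorem trigMonomial_add (k : ι → ℤ) (w y : ι → ℝ) :
    trigMonomial k (w + y) = trigMonomial k y * trigMonomial k w := by
  simp only [trigMonomial, ← Complex.exp_add, Pi.add_apply, Complex.ofReal_add, mul_add,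
    Finset.sum_add_distrib]
  ring_nf

theorem trigMonomial_eq_toCircle (k : ι → ℤ) (y : ι → ℝ) :
    trigMonomial k y = AddCircle.toCircle (∑ i, k i • toTorus (2 * π) y i) := by
  have hsum : ∑ i, k i • toTorus (2 * π) y i = ((∑ i, k i • y i : ℝ) : AddCircle (2 * π)) := by
    simp only [toTorus, ← AddCircle.coe_zsmul]
    exact (map_sum (QuotientAddGroup.mk' (AddSubgroup.zmultiples (2 * π))) _ _).symm
  rw [hsum, AddCircle.toCircle_apply_mk, Circle.coe_exp, trigMonomial,
    div_self two_pi_pos.ne', one_mul, mul_comm]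
  push_cast
  simp only [zsmul_eq_mul]

theorem trigMonomial_congr (k : ι → ℤ) {w z : ι → ℝ}
    (h : toTorus (2 * π) w = toTorus (2 * π) z) : trigMonomial k w = trigMonomial k z := by
  rw [trigMonomial_eq_toCircle, trigMonomial_eq_toCircle, h]

end TrigMonomial

noncomputable abbrev trigPolynomials (ι : Type*) [Fintype ι] (Q : Set (ι → ℤ)) :
    Submodule ℂ ((ι → ℝ) → ℂ) :=
  Submodule.span ℂ (trigMonomial '' Q)

namespace trigPolynomials

variable {ι : Type*} [Fintype ι] {Q : Set (ι → ℤ)} {f : (ι → ℝ) → ℂ}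

theorem comp_add_mem (hf : f ∈ trigPolynomials ι Q) (y : ι → ℝ) :
    (fun w => f (w + y)) ∈ trigPolynomials ι Q := by
  have hmap : Submodule.map (LinearMap.funLeft ℂ ℂ (· + y)) (trigPolynomials ι Q)
      ≤ trigPolynomials ι Q := by
    rw [Submodule.map_span, Submodule.span_le]
    rintro _ ⟨_, ⟨k, hk, rfl⟩, rfl⟩
    have htranslate : LinearMap.funLeft ℂ ℂ (· + y) (trigMonomial k)
        = trigMonomial k y • trigMonomial k :=
      funext fun w => trigMonomial_add k w y
    rw [htranslate]
    exact Submodule.smul_mem _ _ (Submodule.subset_span ⟨k, hk, rfl⟩)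
  exact hmap (Submodule.mem_map_of_mem hf)

theorem apply_eq_of_toTorus_eq (hf : f ∈ trigPolynomials ι Q) {w z : ι → ℝ}
    (h : toTorus (2 * π) w = toTorus (2 * π) z) : f w = f z := by
  induction hf using Submodule.span_induction with
  | mem g hg =>
    obtain ⟨k, -, rfl⟩ := hg
    exact trigMonomial_congr k h
  | zero => rfl
  | add g₁ g₂ _ _ ih₁ ih₂ => simp only [Pi.add_apply, ih₁, ih₂]
  | smul c g _ ih => simp only [Pi.smul_apply, ih]

end trigPolynomials

section Torus

variable (p : ℝ) [Fact (0 < p)]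

noncomputable def torusRep {ι : Type*} (v : ι → AddCircle p) : ι → ℝ :=
  fun i => (AddCircle.equivIco p 0 (v i) : ℝ)

variable {ι : Type*}

theorem toTorus_torusRep (v : ι → AddCircle p) : toTorus p (torusRep p v) = v :=
  funext fun i => (AddCircle.equivIco p 0).symm_apply_apply (v i)

theorem torusRep_mem_pi_Ico (v : ι → AddCircle p) :
    torusRep p v ∈ univ.pi fun _ => Ico 0 p := fun i _ => by
  rw [show Ico (0 : ℝ) p = Ico 0 (0 + p) by rw [zero_add]]
  exact (AddCircle.equivIco p 0 (v i)).2

theorem measurable_coe_equivIco :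
    Measurable fun v : AddCircle p => (AddCircle.equivIco p 0 v : ℝ) :=
  measurable_subtype_coe.comp (AddCircle.measurableEquivIco p 0).measurable

theorem measurable_torusRep : Measurable (torusRep p (ι := ι)) :=
  measurable_pi_lambda _ fun i => (measurable_coe_equivIco p).comp (measurable_pi_apply i)

theorem map_coe_equivIco_volume :
    volume.map (fun v : AddCircle p => (AddCircle.equivIco p 0 v : ℝ))
      = volume.restrict (Ico 0 p) := by
  rw [← (AddCircle.measurePreserving_mk p 0).map_eq, ← restrict_Ico_eq_restrict_Ioc,
    Measure.map_map (measurable_coe_equivIco p) AddCircle.measurable_mk',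
    show Ico (0 : ℝ) p = Ico 0 (0 + p) by rw [zero_add]]
  conv_rhs => rw [← Measure.map_id (μ := volume.restrict (Ico 0 (0 + p)))]
  refine Measure.map_congr ?_
  filter_upwards [ae_restrict_mem measurableSet_Ico] with t ht
  rw [Function.comp_apply, AddCircle.equivIco_coe_eq ht, id]

variable [Fintype ι]

theorem map_torusRep_volume :
    volume.map (torusRep p) = volume.restrict (univ.pi fun _ : ι => Ico 0 p) := by
  change volume.map (fun (v : ι → AddCircle p) (i : ι) => (AddCircle.equivIco p 0 (v i) : ℝ)) = _
  rw [volume_pi, volume_pi, Measure.restrict_pi_pi,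
    Measure.pi_map_pi fun _ => (measurable_coe_equivIco p).aemeasurable, map_coe_equivIco_volume]

theorem volume_preimage_torusRep_le (B : Set (ι → ℝ)) :
    volume (torusRep p ⁻¹' B) ≤ volume.restrict (univ.pi fun _ : ι => Ico 0 p) B :=
  map_torusRep_volume (ι := ι) p ▸ Measure.le_map_apply (measurable_torusRep p).aemeasurable B

theorem volume_univ_torus :
    volume (univ : Set (ι → AddCircle p)) = ENNReal.ofReal p ^ Fintype.card ι := by
  simp [volume_pi, Measure.pi_univ, AddCircle.measure_univ]

end Torus

theorem exists_add_notMem_of_card_mul_lt {G ι : Type*} [Fintype ι] [MeasurableSpace G]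
    [AddGroup G] [MeasurableAdd G] (μ : Measure G) [μ.IsAddLeftInvariant] (x : ι → G)
    {B : Set G} (hB : Fintype.card ι * μ B < μ univ) : ∃ y, ∀ j, x j + y ∉ B := by
  by_contra! h
  refine hB.not_ge ?_
  calc μ univ ≤ μ (⋃ j, (x j + ·) ⁻¹' B) := measure_mono fun y _ => mem_iUnion.2 (h y)
    _ ≤ ∑ j, μ ((x j + ·) ⁻¹' B) := measure_iUnion_fintype_le μ _
    _ = Fintype.card ι * μ B := by simp [measure_preimage_add]

theorem ENNReal.natCast_mul_lt_of_inv_mul_lt_one_div {a c : ENNReal} {m : ℕ} (hm : m ≠ 0)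
    (hc : c ≠ 0) (hc' : c ≠ ⊤) (h : c⁻¹ * a < 1 / m) : m * a < c := by
  rw [← ENNReal.div_eq_inv_mul, ENNReal.div_lt_iff (.inl hc) (.inl hc'), one_div,
    ← ENNReal.div_eq_inv_mul,
    ENNReal.lt_div_iff_mul_lt (.inl (Nat.cast_ne_zero.2 hm)) (.inl (ENNReal.natCast_ne_top m))] at h
  rwa [mul_comm]

theorem remez_for_trig_polynomials_general
    (d : ℕ) (Q : Finset (Fin d → ℤ))
    (D : ℝ) (hD : 1 ≤ D) (m : ℕ) (hm : 0 < m) (x : Fin m → (Fin d → ℝ))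
    (T : Submodule ℂ ((Fin d → ℝ) → ℂ))
    (hT : T = Submodule.span ℂ
      ((fun k : Fin d → ℤ => fun y : Fin d → ℝ =>
        Complex.exp (Complex.I * ∑ i, (k i : ℂ) * (y i : ℂ))) '' (Q : Set (Fin d → ℤ))))
    (hdisc : ∀ f ∈ T, ∀ z : Fin d → ℝ,
      ‖f z‖ ≤ D * Finset.univ.sup' (Finset.univ_nonempty_iff.mpr ⟨⟨0, hm⟩⟩)
        (fun j => ‖f (x j)‖))
    (box : Set (Fin d → ℝ))
    (hbox : box = Set.univ.pi fun _ : Fin d => Set.Ico (0 : ℝ) (2 * Real.pi))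
    (B : Set (Fin d → ℝ))
    (hBsmall : ((ENNReal.ofReal ((2 * Real.pi) ^ d))⁻¹ • volume.restrict box) B
      < 1 / m) :
    ∀ f ∈ T, ∀ z : Fin d → ℝ,
      ‖f z‖ ≤ D * sSup ((fun w => ‖f w‖) '' (box \ B)) := by
  intro f hf z
  subst hT
  have : Fact (0 < 2 * π) := ⟨two_pi_pos⟩
  have hsmall : Fintype.card (Fin m) * volume (torusRep (2 * π) ⁻¹' B)
      < volume (univ : Set (Fin d → AddCircle (2 * π))) := by
    rw [Measure.smul_apply, smul_eq_mul, hbox] at hBsmall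
    rw [volume_univ_torus, Fintype.card_fin, Fintype.card_fin, ← ENNReal.ofReal_pow two_pi_pos.le]
    calc _ ≤ (m : ENNReal) * volume.restrict (univ.pi fun _ => Ico 0 (2 * π)) B := by
          gcongr; exact volume_preimage_torusRep_le _ B
      _ < _ := ENNReal.natCast_mul_lt_of_inv_mul_lt_one_div hm.ne' (by positivity)
          ENNReal.ofReal_ne_top hBsmall
  obtain ⟨η, hη⟩ := exists_add_notMem_of_card_mul_lt volume (fun j => toTorus (2 * π) (x j)) hsmall
  set y := torusRep (2 * π) η
  have hbdd : BddAbove ((fun w => ‖f w‖) '' (box \ B)) :=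
    ⟨_, forall_mem_image.2 fun w _ => hdisc f hf w⟩
  have hnodes : ∀ j, ‖f (x j + y)‖ ≤ sSup ((fun w => ‖f w‖) '' (box \ B)) := fun j => by
    have hxy : toTorus (2 * π) (x j + y) = toTorus (2 * π) (x j) + η := by
      rw [toTorus_add, toTorus_torusRep]
    refine le_csSup hbdd ⟨torusRep (2 * π) (toTorus (2 * π) (x j + y)),
      ⟨hbox ▸ torusRep_mem_pi_Ico _ _, hxy ▸ hη j⟩, ?_⟩
    exact congrArg norm (trigPolynomials.apply_eq_of_toTorus_eq hf (toTorus_torusRep _ _))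
  calc ‖f z‖ = ‖f (z - y + y)‖ := by rw [sub_add_cancel]
    _ ≤ D * Finset.univ.sup' _ fun j => ‖f (x j + y)‖ :=
        hdisc _ (trigPolynomials.comp_add_mem hf y) _
    _ ≤ _ := mul_le_mul_of_nonneg_left (Finset.sup'_le _ _ fun j _ => hnodes j) (by linarith)

theorem remez_for_trig_polynomials
    (d : ℕ) (Q : Finset (Fin d → ℤ))
    (D : ℝ) (hD : 1 ≤ D) (m : ℕ) (hm : 0 < m) (x : Fin m → (Fin d → ℝ))
    (T : Submodule ℂ ((Fin d → ℝ) → ℂ))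
    (hT : T = Submodule.span ℂ
      ((fun k : Fin d → ℤ => fun y : Fin d → ℝ =>
        Complex.exp (Complex.I * ∑ i, (k i : ℂ) * (y i : ℂ))) '' (Q : Set (Fin d → ℤ))))
    (hdisc : ∀ f ∈ T, ∀ z : Fin d → ℝ,
      ‖f z‖ ≤ D * Finset.univ.sup' (Finset.univ_nonempty_iff.mpr ⟨⟨0, hm⟩⟩)
        (fun j => ‖f (x j)‖))
    (box : Set (Fin d → ℝ))
    (hbox : box = Set.univ.pi fun _ : Fin d => Set.Ico (0 : ℝ) (2 * Real.pi))
    (B : Set (Fin d → ℝ)) (hBbox : B ⊆ box) (hB : MeasurableSet B)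
    (hBsmall : ((ENNReal.ofReal ((2 * Real.pi) ^ d))⁻¹ • volume.restrict box) B
      < 1 / m) :
    ∀ f ∈ T, ∀ z : Fin d → ℝ,
      ‖f z‖ ≤ D * sSup ((fun w => ‖f w‖) '' (box \ B)) :=
  remez_for_trig_polynomials_general d Q D hD m hm x T hT hdisc box hbox B hBsmall
end
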